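/- Let n ≥ 2, let a_1, …, a_{n−1}, q_1, …, q_{n−1}, x_1, …, x_{n−1}, x_n, b, w_n be positive real numbers, and let J be the (2n−1)×(2n−1) real matrix in block form J = [[O, A, 0], [R, −b w_n I, 0], [r, 0, −b w_n]], where O is the (n−1)×(n−1) zero matrix, A = −w_n · diag(a_1, …, a_{n−1}), R is the (n−1)×(n−1) matrix with diagonal entries q_j − x_j and off-diagonal entries −x_j in row j, I is the identity of order n−1, and r is the length-(n−1) row vector all of whose entries are −x_n. Then the characteristic polynomial f(z) = det(zI_{2n−1} − J) satisfies f(z) = (z + b w_n) · [∏_{k=1}^{n−1}(z² + b w_n z + a_k q_k w_n) − Σ_{l=1}^{n−1} a_l x_l w_n ∏_{k≠l}(z² + b w_n z + a_k q_k w_n)]. -/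
import Mathlib

lemma aux_det (m : ℕ) (d c : Fin m → ℝ) (hd : ∀ i, d i ≠ 0) :
    (Matrix.of fun i j : Fin m => (if i = j then d i else 0) - c i).det
      = ∏ i, d i - ∑ l, c l * ∏ k ∈ Finset.univ.erase l, d k := by
  have hM : (Matrix.of fun i j : Fin m => (if i = j then d i else 0) - c i)
      = Matrix.diagonal d *
        (1 + Matrix.replicateCol Unit (fun i => -(c i / d i)) * Matrix.replicateRow Unit (fun _ => (1:ℝ))) := by
    ext i j
    simp [Matrix.mul_apply, Matrix.diagonal_apply, Matrix.one_apply, mul_add,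
      Finset.mul_sum, apply_ite (d i * ·), Finset.sum_add_distrib, Finset.sum_ite_eq,
      Finset.sum_ite_eq', mul_div_cancel₀ _ (hd i), sub_eq_add_neg]
  rw [hM, Matrix.det_mul, Matrix.det_diagonal, Matrix.det_one_add_replicateCol_mul_replicateRow]
  have hdp : dotProduct (fun _ : Fin m => (1:ℝ)) (fun i => -(c i / d i))
      = -∑ i, c i / d i := by
    simp [dotProduct]
  rw [hdp]
  rw [← sub_eq_add_neg, mul_sub, mul_one, Finset.mul_sum]
  congr 1
  refine Finset.sum_congr rfl fun l _ => ?_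
  rw [← Finset.mul_prod_erase _ d (Finset.mem_univ l),
    mul_comm (d l) (∏ k ∈ Finset.univ.erase l, d k), mul_assoc, mul_div_assoc',
    mul_div_cancel_left₀ _ (hd l), mul_comm]

theorem stmt_7 (n : ℕ) (hn : 2 ≤ n)
    (a q x : Fin (n - 1) → ℝ) (xn b wn : ℝ)
    (ha : ∀ k, 0 < a k) (hq : ∀ k, 0 < q k) (hx : ∀ k, 0 < x k)
    (hxn : 0 < xn) (hb : 0 < b) (hwn : 0 < wn)
    (J : Matrix (Fin (n - 1) ⊕ (Fin (n - 1) ⊕ Unit))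
      (Fin (n - 1) ⊕ (Fin (n - 1) ⊕ Unit)) ℝ)
    (hJ : J = Matrix.of fun i j =>
      match i, j with
      | Sum.inl _, Sum.inl _ => 0
      | Sum.inl i, Sum.inr (Sum.inl j) => if i = j then -(wn * a i) else 0
      | Sum.inl _, Sum.inr (Sum.inr _) => 0
      | Sum.inr (Sum.inl i), Sum.inl j => if i = j then q i - x i else -x i
      | Sum.inr (Sum.inl i), Sum.inr (Sum.inl j) => if i = j then -(b * wn) else 0
      | Sum.inr (Sum.inl _), Sum.inr (Sum.inr _) => 0
      | Sum.inr (Sum.inr _), Sum.inl _ => -xn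
      | Sum.inr (Sum.inr _), Sum.inr (Sum.inl _) => 0
      | Sum.inr (Sum.inr _), Sum.inr (Sum.inr _) => -(b * wn)) :
    ∀ z : ℝ, (z • (1 : Matrix (Fin (n - 1) ⊕ (Fin (n - 1) ⊕ Unit))
        (Fin (n - 1) ⊕ (Fin (n - 1) ⊕ Unit)) ℝ) - J).det =
      (z + b * wn) *
        (∏ k, (z ^ 2 + b * wn * z + a k * q k * wn) -
          ∑ l, a l * x l * wn *
            ∏ k ∈ Finset.univ.erase l, (z ^ 2 + b * wn * z + a k * q k * wn)) := by
  classical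
  have key : ∀ z : ℝ, 0 < z →
      (z • (1 : Matrix (Fin (n - 1) ⊕ (Fin (n - 1) ⊕ Unit))
        (Fin (n - 1) ⊕ (Fin (n - 1) ⊕ Unit)) ℝ) - J).det =
      (z + b * wn) *
        (∏ k, (z ^ 2 + b * wn * z + a k * q k * wn) -
          ∑ l, a l * x l * wn *
            ∏ k ∈ Finset.univ.erase l, (z ^ 2 + b * wn * z + a k * q k * wn)) := by
    intro z hz0
    have hz : z + b * wn ≠ 0 := ne_of_gt (by positivity)
    set A1 : Matrix (Fin (n-1)) (Fin (n-1)) ℝ := z • 1 with hA1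
    set B1 : Matrix (Fin (n-1)) (Fin (n-1)) ℝ :=
      Matrix.of fun i j => if i = j then wn * a i else 0 with hB1
    set C1 : Matrix (Fin (n-1)) (Fin (n-1)) ℝ :=
      Matrix.of fun i j => if i = j then x i - q i else x i with hC1
    set D1 : Matrix (Fin (n-1)) (Fin (n-1)) ℝ := (z + b * wn) • 1 with hD1
    set r1 : Matrix Unit (Fin (n-1) ⊕ Fin (n-1)) ℝ :=
      Matrix.of fun _ j => Sum.elim (fun _ => xn) (fun _ => (0:ℝ)) j with hr1
    set D2 : Matrix Unit Unit ℝ := Matrix.of fun _ _ => z + b * wn with hD2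
    have hEq : (z • (1 : Matrix (Fin (n - 1) ⊕ (Fin (n - 1) ⊕ Unit))
          (Fin (n - 1) ⊕ (Fin (n - 1) ⊕ Unit)) ℝ) - J).submatrix
          (Equiv.sumAssoc (Fin (n-1)) (Fin (n-1)) Unit)
          (Equiv.sumAssoc (Fin (n-1)) (Fin (n-1)) Unit)
        = Matrix.fromBlocks (Matrix.fromBlocks A1 B1 C1 D1) 0 r1 D2 := by
      ext i j
      rcases i with (i | i) | i <;> rcases j with (j | j) | j <;>
        (simp only [hJ, hA1, hB1, hC1, hD1, hr1, hD2, Matrix.submatrix_apply,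
          Equiv.sumAssoc_apply_inl_inl, Equiv.sumAssoc_apply_inl_inr, Equiv.sumAssoc_apply_inr,
          Matrix.sub_apply, Matrix.smul_apply, Matrix.one_apply, Matrix.of_apply,
          Matrix.fromBlocks_apply₁₁, Matrix.fromBlocks_apply₁₂, Matrix.fromBlocks_apply₂₁,
          Matrix.fromBlocks_apply₂₂, Matrix.zero_apply, Sum.elim_inl, Sum.elim_inr,
          smul_eq_mul, Sum.inl.injEq, Sum.inr.injEq, eq_iff_true_of_subsingleton,
          if_true, reduceCtorEq, if_false]) <;>
        first
          | rfl
          | ring1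
          | (split_ifs <;> ring1)
    haveI : Invertible D1 := ⟨(z + b * wn)⁻¹ • (1 : Matrix (Fin (n-1)) (Fin (n-1)) ℝ),
      by simp [hD1, Matrix.smul_mul, Matrix.mul_smul, smul_smul, inv_mul_cancel₀ hz, mul_inv_cancel₀ hz],
      by simp [hD1, Matrix.smul_mul, Matrix.mul_smul, smul_smul, inv_mul_cancel₀ hz, mul_inv_cancel₀ hz]⟩
    have hInv : ⅟D1 = (z + b * wn)⁻¹ • (1 : Matrix (Fin (n-1)) (Fin (n-1)) ℝ) :=
      invOf_eq_right_inv (by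
        simp [hD1, Matrix.smul_mul, Matrix.mul_smul, smul_smul, inv_mul_cancel₀ hz,
          mul_inv_cancel₀ hz])
    rw [← Matrix.det_submatrix_equiv_self
      (Equiv.sumAssoc (Fin (n-1)) (Fin (n-1)) Unit), hEq,
      Matrix.det_fromBlocks_zero₁₂, Matrix.det_fromBlocks₂₂, hInv]
    have hBC : B1 * ((z + b * wn)⁻¹ • (1 : Matrix (Fin (n-1)) (Fin (n-1)) ℝ)) * C1
        = (z + b * wn)⁻¹ • (B1 * C1) := by
      rw [Matrix.mul_smul, Matrix.mul_one, Matrix.smul_mul]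
    rw [hBC]
    have hdetD1 : D1.det = (z + b * wn) ^ Fintype.card (Fin (n-1)) := by
      simp [hD1]
    rw [hdetD1, ← Matrix.det_smul]
    have hN0 : (z + b * wn) • (A1 - (z + b * wn)⁻¹ • (B1 * C1))
        = Matrix.of (fun i j : Fin (n-1) =>
            (if i = j then (z ^ 2 + b * wn * z + a i * q i * wn) else 0) - a i * x i * wn) := by
      rw [smul_sub, smul_smul (z + b * wn) (z + b * wn)⁻¹, mul_inv_cancel₀ hz, one_smul]
      ext i j
      simp only [hA1, hB1, hC1, Matrix.sub_apply, Matrix.smul_apply, Matrix.mul_apply,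
        Matrix.one_apply, Matrix.of_apply, ite_mul, zero_mul, Finset.sum_ite_eq,
        Finset.mem_univ, if_true, smul_eq_mul]
      split_ifs <;> ring
    rw [hN0, aux_det _ _ _ (fun i => by
      have h1 := ha i; have h2 := hq i
      exact ne_of_gt (by positivity))]
    have hdetD2 : D2.det = z + b * wn := by simp [hD2, Matrix.det_unique]
    rw [hdetD2]
    ring
  -- polynomial argument to extend to all z
  set P : Polynomial ℝ :=
    ((Polynomial.X : Polynomial ℝ) • (1 : Matrix (Fin (n - 1) ⊕ (Fin (n - 1) ⊕ Unit)) (Fin (n - 1) ⊕ (Fin (n - 1) ⊕ Unit)) (Polynomial ℝ)) - J.map Polynomial.C).det with hPdef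
  set Q : Polynomial ℝ := (Polynomial.X + Polynomial.C (b * wn)) *
      (∏ k, (Polynomial.X ^ 2 + Polynomial.C (b * wn) * Polynomial.X
          + Polynomial.C (a k * q k * wn)) -
        ∑ l, Polynomial.C (a l * x l * wn) *
          ∏ k ∈ Finset.univ.erase l, (Polynomial.X ^ 2 + Polynomial.C (b * wn) * Polynomial.X
            + Polynomial.C (a k * q k * wn))) with hQdef
  have hP : ∀ z : ℝ, P.eval z = (z • (1 : Matrix (Fin (n - 1) ⊕ (Fin (n - 1) ⊕ Unit)) (Fin (n - 1) ⊕ (Fin (n - 1) ⊕ Unit)) ℝ) - J).det := by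
    intro z
    have h := RingHom.map_det (Polynomial.evalRingHom z)
      ((Polynomial.X : Polynomial ℝ) • (1 : Matrix (Fin (n - 1) ⊕ (Fin (n - 1) ⊕ Unit)) (Fin (n - 1) ⊕ (Fin (n - 1) ⊕ Unit)) (Polynomial ℝ)) - J.map Polynomial.C)
    have h2 : (((Polynomial.X : Polynomial ℝ) • (1 : Matrix (Fin (n - 1) ⊕ (Fin (n - 1) ⊕ Unit)) (Fin (n - 1) ⊕ (Fin (n - 1) ⊕ Unit)) (Polynomial ℝ)) - J.map Polynomial.C).map
        (Polynomial.evalRingHom z)) = z • (1 : Matrix (Fin (n - 1) ⊕ (Fin (n - 1) ⊕ Unit)) (Fin (n - 1) ⊕ (Fin (n - 1) ⊕ Unit)) ℝ) - J := by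
      ext i j
      simp [Matrix.map_apply, Matrix.one_apply, apply_ite (Polynomial.eval z)]
    rw [hPdef]
    calc Polynomial.eval z ((Polynomial.X : Polynomial ℝ) • (1 : Matrix (Fin (n - 1) ⊕ (Fin (n - 1) ⊕ Unit)) (Fin (n - 1) ⊕ (Fin (n - 1) ⊕ Unit)) (Polynomial ℝ))
          - J.map Polynomial.C).det
        = (Polynomial.evalRingHom z) ((Polynomial.X : Polynomial ℝ) • (1 : Matrix (Fin (n - 1) ⊕ (Fin (n - 1) ⊕ Unit)) (Fin (n - 1) ⊕ (Fin (n - 1) ⊕ Unit)) (Polynomial ℝ))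
          - J.map Polynomial.C).det := rfl
      _ = _ := by rw [h, RingHom.mapMatrix_apply, h2]
  have hQ : ∀ z : ℝ, Q.eval z =
      (z + b * wn) *
        (∏ k, (z ^ 2 + b * wn * z + a k * q k * wn) -
          ∑ l, a l * x l * wn *
            ∏ k ∈ Finset.univ.erase l, (z ^ 2 + b * wn * z + a k * q k * wn)) := by
    intro z
    simp [hQdef, Polynomial.eval_prod, Polynomial.eval_finset_sum]
  have hPQ : P = Q := by
    apply Polynomial.eq_of_infinite_eval_eq
    apply Set.Infinite.mono (s := Set.Ioi (0:ℝ)) _ (Set.Ioi_infinite 0)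
    intro z hz
    simp only [Set.mem_setOf_eq]
    rw [hP, hQ, key z hz]
  intro z
  rw [← hP z, hPQ, hQ]
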